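/- arXiv:1509.07550 — 2 statements merged into one kernel-verified Lean document; each statement's English description precedes it below -/
import Mathlib

section
/- For λ ∈ (0,∞), λ ≠ 1, the function n ↦ f(n,ℓ) = λ^{2(ℓ-1)}(1-λ^{2(n+1-ℓ)})(1-λ^2) / ((1-λ^{2ℓ})(1-λ^{2n})) is monotonically increasing in n for n ≥ ℓ. -/
/-! With `q = λ²`, `y = q^(ℓ-1)` and `x = q^(n+1-ℓ)` the function is
`y (1 - q) / (1 - q y) · (1 - x) / (1 - x y)`. Every factor `1 - q^m` with `m ≥ 1` has the sign
of `1 - q`, so the prefactor is positive, and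
`(1 - x') / (1 - x' y) - (1 - x) / (1 - x y) = (x - x') (1 - y) / ((1 - x y) (1 - x' y))`
is a quotient of products of factors with the sign of `1 - q`, with two of them on each side. -/

section OrderedField

variable {K : Type*} [Field K] [LinearOrder K] [IsStrictOrderedRing K] {q : K}

lemma zpow_sub_zpow_mul_one_sub_pos (hq : 0 < q) (hq1 : q ≠ 1) {k k' : ℤ} (hk : k < k') :
    0 < (q ^ k - q ^ k') * (1 - q) := by
  rcases hq1.lt_or_gt with hlt | hgt
  · exact mul_pos (sub_pos.mpr (zpow_lt_zpow_right_of_lt_one₀ hq hlt hk)) (sub_pos.mpr hlt)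
  · exact mul_pos_of_neg_of_neg (sub_neg.mpr (zpow_lt_zpow_right₀ hgt hk)) (sub_neg.mpr hgt)

lemma zpow_sub_zpow_mul_one_sub_nonneg (hq : 0 < q) (hq1 : q ≠ 1) {k k' : ℤ} (hk : k ≤ k') :
    0 ≤ (q ^ k - q ^ k') * (1 - q) := by
  rcases hk.eq_or_lt with rfl | hlt
  · simp
  · exact (zpow_sub_zpow_mul_one_sub_pos hq hq1 hlt).le

lemma one_sub_zpow_mul_one_sub_pos (hq : 0 < q) (hq1 : q ≠ 1) {m : ℤ} (hm : 0 < m) :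
    0 < (1 - q ^ m) * (1 - q) := by
  simpa using zpow_sub_zpow_mul_one_sub_pos hq hq1 hm

lemma one_sub_zpow_mul_one_sub_nonneg (hq : 0 < q) (hq1 : q ≠ 1) {m : ℤ} (hm : 0 ≤ m) :
    0 ≤ (1 - q ^ m) * (1 - q) := by
  simpa using zpow_sub_zpow_mul_one_sub_nonneg hq hq1 hm

lemma one_sub_div_one_sub_zpow_pos (hq : 0 < q) (hq1 : q ≠ 1) {m : ℤ} (hm : 0 < m) :
    0 < (1 - q) / (1 - q ^ m) :=
  div_pos_iff.mpr
    ((mul_pos_iff.mp (one_sub_zpow_mul_one_sub_pos hq hq1 hm)).imp And.symm And.symm)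

lemma one_sub_div_one_sub_mul_le {x x' y c : K} (h : 0 < (1 - x * y) * c)
    (h' : 0 < (1 - x' * y) * c) (hx : 0 ≤ (x - x') * c) (hy : 0 ≤ (1 - y) * c) :
    (1 - x) / (1 - x * y) ≤ (1 - x') / (1 - x' * y) := by
  have hd : 1 - x * y ≠ 0 := by rintro hz; simp [hz] at h
  have hd' : 1 - x' * y ≠ 0 := by rintro hz; simp [hz] at h'
  have hdiff : (1 - x') / (1 - x' * y) - (1 - x) / (1 - x * y) =
      (x - x') * c * ((1 - y) * c) / ((1 - x * y) * c * ((1 - x' * y) * c)) := by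
    rw [div_sub_div _ _ hd' hd, div_eq_div_iff (mul_ne_zero hd' hd) (mul_pos h h').ne']
    ring
  rw [← sub_nonneg, hdiff]
  exact div_nonneg (mul_nonneg hx hy) (mul_pos h h').le

lemma zpow_mul_one_sub_zpow_div_le_of_le (hq : 0 < q) (hq1 : q ≠ 1) {j k k' : ℤ} (hj : 0 ≤ j)
    (hk : 0 < k) (hkk' : k ≤ k') :
    q ^ j * (1 - q ^ k) * (1 - q) / ((1 - q ^ (j + 1)) * (1 - q ^ (j + k))) ≤
      q ^ j * (1 - q ^ k') * (1 - q) / ((1 - q ^ (j + 1)) * (1 - q ^ (j + k'))) := by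
  have hsplit : ∀ m : ℤ,
      q ^ j * (1 - q ^ m) * (1 - q) / ((1 - q ^ (j + 1)) * (1 - q ^ (j + m))) =
        q ^ j * (1 - q) / (1 - q ^ (j + 1)) * ((1 - q ^ m) / (1 - q ^ m * q ^ j)) := by
    intro m
    rw [zpow_add₀ hq.ne' j m, mul_comm (q ^ j) (q ^ m), div_mul_div_comm]
    ring
  have hprefactor : 0 < q ^ j * (1 - q) / (1 - q ^ (j + 1)) := by
    rw [mul_div_assoc]
    exact mul_pos (zpow_pos hq j) (one_sub_div_one_sub_zpow_pos hq hq1 (by omega))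
  have hsign : ∀ m : ℤ, 0 < m → 0 < (1 - q ^ m * q ^ j) * (1 - q) := fun m hm => by
    rw [← zpow_add₀ hq.ne']
    exact one_sub_zpow_mul_one_sub_pos hq hq1 (by omega)
  rw [hsplit, hsplit]
  exact mul_le_mul_of_nonneg_left
    (one_sub_div_one_sub_mul_le (hsign k hk) (hsign k' (by omega))
      (zpow_sub_zpow_mul_one_sub_nonneg hq hq1 hkk') (one_sub_zpow_mul_one_sub_nonneg hq hq1 hj))
    hprefactor.le

end OrderedField

theorem stmt_1 (l : ℝ) (hl : 0 < l) (hne : l ≠ 1) (L : ℤ) (hL : 2 ≤ L)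
    (n n' : ℤ) (hn : L ≤ n) (hnn' : n ≤ n') :
    l ^ (2 * (L - 1)) * (1 - l ^ (2 * (n + 1 - L))) * (1 - l ^ (2 : ℤ)) /
      ((1 - l ^ (2 * L)) * (1 - l ^ (2 * n))) ≤
    l ^ (2 * (L - 1)) * (1 - l ^ (2 * (n' + 1 - L))) * (1 - l ^ (2 : ℤ)) /
      ((1 - l ^ (2 * L)) * (1 - l ^ (2 * n'))) := by
  have hsq_ne : l ^ (2 : ℤ) ≠ 1 := by
    rw [zpow_ofNat]
    exact fun h => hne ((pow_eq_one_iff_of_nonneg hl.le two_ne_zero).mp h)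
  have key := zpow_mul_one_sub_zpow_div_le_of_le (zpow_pos hl 2) hsq_ne
    (j := L - 1) (k := n + 1 - L) (k' := n' + 1 - L) (by omega) (by omega) (by omega)
  have hexp : ∀ m : ℤ, L - 1 + (m + 1 - L) = m := fun m => by ring
  rw [sub_add_cancel, hexp, hexp] at key
  simpa only [← zpow_mul] using key
end

section
/- Let m₁ > 0, m₂ ≥ 0 and consider the lattice parallelogram P(b₁,b₂,L₁,L₂) = {x ∈ ℤ² : 0 ≤ (m₁(x₁-b₁) + m₂(x₂-b₂))/m₁ < L₁, 0 ≤ x₂-b₂ < L₂}. If L₁ ≥ m₂/m₁ + 1, then P(b₁,b₂,L₁,L₂) is connected as a subgraph of ℤ² with nearest-neighbor edges. -/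
/-!
Each row of the parallelogram is an interval of integers, so it is connected by horizontal
steps. The left boundary `f c = b₁ - (m₂/m₁)(c - b₂)` of row `c` drops by `m₂/m₁ ≥ 0` from one row
to the next, and the rows have width `L₁ ≥ m₂/m₁ + 1`; hence `⌈f c⌉` lies in both row `c` and
row `c + 1`, which gives a vertical step between any two consecutive rows.
-/

open Relation

def latticeAdj (S : Set (ℤ × ℤ)) (a b : ℤ × ℤ) : Prop :=
  a ∈ S ∧ b ∈ S ∧ |a.1 - b.1| + |a.2 - b.2| = 1

namespace latticeAdj

variable {S : Set (ℤ × ℤ)}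

instance : Std.Symm (latticeAdj S) where
  symm a b := fun ⟨ha, hb, h⟩ => ⟨hb, ha, by rwa [abs_sub_comm b.1, abs_sub_comm b.2]⟩

theorem reflTransGen_of_mem_row {c a d : ℤ} (hrow : Set.OrdConnected {x | (x, c) ∈ S})
    (ha : (a, c) ∈ S) (hd : (d, c) ∈ S) : ReflTransGen (latticeAdj S) (a, c) (d, c) := by
  wlog had : a ≤ d generalizing a d
  · exact symm (this hd ha (le_of_not_ge had))
  have hseg : ∀ x ∈ Set.Icc a d, (x, c) ∈ S := fun x hx => hrow.out ha hd hx
  induction d, had using Int.leInduction with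
  | base => exact ReflTransGen.refl
  | succ d had ih =>
    have hd' : (d, c) ∈ S := hseg d ⟨had, by omega⟩
    refine (ih hd' fun x hx => hseg x ⟨hx.1, by linarith [hx.2]⟩).tail ⟨hd', hd, ?_⟩
    simp

theorem reflTransGen_of_ordConnected_rows
    (hrow : ∀ c, Set.OrdConnected {x | (x, c) ∈ S})
    (hstep : ∀ p ∈ S, ∀ q ∈ S, p.2 < q.2 → ∃ x, (x, p.2) ∈ S ∧ (x, p.2 + 1) ∈ S)
    {p q : ℤ × ℤ} (hp : p ∈ S) (hq : q ∈ S) : ReflTransGen (latticeAdj S) p q := by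
  wlog hpq : p.2 ≤ q.2 generalizing p q
  · exact symm (this hq hp (le_of_not_ge hpq))
  obtain ⟨n, hn⟩ : ∃ n : ℕ, q.2 - p.2 = n := ⟨(q.2 - p.2).toNat, by omega⟩
  induction n generalizing p with
  | zero =>
    obtain ⟨p₁, p₂⟩ := p
    obtain ⟨q₁, q₂⟩ := q
    obtain rfl : q₂ = p₂ := by simp only at hn; omega
    exact reflTransGen_of_mem_row (hrow _) hp hq
  | succ n ih =>
    obtain ⟨x, hx, hx'⟩ := hstep p hp q hq (by omega)
    have hrung : latticeAdj S (x, p.2) (x, p.2 + 1) := ⟨hx, hx', by simp⟩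
    exact ((reflTransGen_of_mem_row (hrow _) hp hx).tail hrung).trans
      (ih hx' (by simp only; omega) (by simp only; omega))

end latticeAdj

def rowStrip (f : ℤ → ℝ) (L : ℝ) (b n : ℤ) : Set (ℤ × ℤ) :=
  {x | f x.2 ≤ x.1 ∧ (x.1 : ℝ) < f x.2 + L ∧ b ≤ x.2 ∧ x.2 < b + n}

section rowStrip

variable {f : ℤ → ℝ} {L : ℝ} {b n : ℤ}

theorem ordConnected_row_rowStrip (c : ℤ) : Set.OrdConnected {x | (x, c) ∈ rowStrip f L b n} := by
  refine ⟨fun a ha d hd x hx => ?_⟩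
  have hax : (a : ℝ) ≤ x := by exact_mod_cast hx.1
  have hxd : (x : ℝ) ≤ d := by exact_mod_cast hx.2
  exact ⟨ha.1.trans hax, hxd.trans_lt hd.2.1, ha.2.2⟩

theorem ceil_mem_rowStrip_and_succ {c : ℤ} (hmono : f (c + 1) ≤ f c)
    (hwidth : f c + 1 ≤ f (c + 1) + L) (hc : b ≤ c) (hc' : c + 1 < b + n) :
    (⌈f c⌉, c) ∈ rowStrip f L b n ∧ (⌈f c⌉, c + 1) ∈ rowStrip f L b n := by
  have hle := Int.le_ceil (f c)
  have hlt := Int.ceil_lt_add_one (f c)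
  exact ⟨⟨hle, by linarith, hc, by omega⟩, ⟨hmono.trans hle, by linarith, by omega, hc'⟩⟩

theorem reflTransGen_latticeAdj_rowStrip (hmono : ∀ c, f (c + 1) ≤ f c)
    (hwidth : ∀ c, f c + 1 ≤ f (c + 1) + L) {p q : ℤ × ℤ}
    (hp : p ∈ rowStrip f L b n) (hq : q ∈ rowStrip f L b n) :
    ReflTransGen (latticeAdj (rowStrip f L b n)) p q := by
  refine latticeAdj.reflTransGen_of_ordConnected_rows ordConnected_row_rowStrip
    (fun p hp q hq hpq => ⟨_, ceil_mem_rowStrip_and_succ (hmono _) (hwidth _) hp.2.2.1 ?_⟩) hp hq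
  linarith [hq.2.2.2]

end rowStrip

theorem stmt_12_general (m₁ m₂ b₁ : ℝ) (hm₁ : 0 < m₁) (hm₂ : 0 ≤ m₂)
    (b₂ L₁ L₂ : ℤ)
    (hslant : (m₂ / m₁ + 1 : ℝ) ≤ L₁)
    (P : Set (ℤ × ℤ))
    (hP : P = {x : ℤ × ℤ |
      0 ≤ (m₁ * ((x.1 : ℝ) - b₁) + m₂ * ((x.2 : ℝ) - b₂)) / m₁ ∧
      (m₁ * ((x.1 : ℝ) - b₁) + m₂ * ((x.2 : ℝ) - b₂)) / m₁ < L₁ ∧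
      b₂ ≤ x.2 ∧ x.2 < b₂ + L₂}) :
    ∀ p ∈ P, ∀ q ∈ P,
      Relation.ReflTransGen
        (fun a b : ℤ × ℤ => a ∈ P ∧ b ∈ P ∧ |a.1 - b.1| + |a.2 - b.2| = 1) p q := by
  set f : ℤ → ℝ := fun c => b₁ - m₂ / m₁ * (c - b₂)
  have hshift : ∀ c, f (c + 1) = f c - m₂ / m₁ := fun c => by simp only [f]; push_cast; ring
  have hslope : 0 ≤ m₂ / m₁ := div_nonneg hm₂ hm₁.le
  obtain rfl : P = rowStrip f L₁ b₂ L₂ := by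
    have hrel : ∀ x : ℤ × ℤ,
        (m₁ * ((x.1 : ℝ) - b₁) + m₂ * ((x.2 : ℝ) - b₂)) / m₁ = x.1 - f x.2 := fun x => by
      simp only [f]; field_simp; ring
    ext x
    simp only [hP, rowStrip, Set.mem_ofPred_eq, hrel, sub_nonneg, sub_lt_iff_lt_add']
  intro p hp q hq
  exact reflTransGen_latticeAdj_rowStrip (fun c => by linarith [hshift c])
    (fun c => by linarith [hshift c]) hp hq

theorem stmt_12 (m₁ m₂ b₁ : ℝ) (hm₁ : 0 < m₁) (hm₂ : 0 ≤ m₂)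
    (b₂ L₁ L₂ : ℤ) (hL₁ : 1 ≤ L₁) (hL₂ : 1 ≤ L₂)
    (hslant : (m₂ / m₁ + 1 : ℝ) ≤ L₁)
    (P : Set (ℤ × ℤ))
    (hP : P = {x : ℤ × ℤ |
      0 ≤ (m₁ * ((x.1 : ℝ) - b₁) + m₂ * ((x.2 : ℝ) - b₂)) / m₁ ∧
      (m₁ * ((x.1 : ℝ) - b₁) + m₂ * ((x.2 : ℝ) - b₂)) / m₁ < L₁ ∧
      b₂ ≤ x.2 ∧ x.2 < b₂ + L₂}) :
    ∀ p ∈ P, ∀ q ∈ P,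
      Relation.ReflTransGen
        (fun a b : ℤ × ℤ => a ∈ P ∧ b ∈ P ∧ |a.1 - b.1| + |a.2 - b.2| = 1) p q :=
  stmt_12_general m₁ m₂ b₁ hm₁ hm₂ b₂ L₁ L₂ hslant P hP
end
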